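/- Let M be a real antisymmetric n×n matrix with X(π) = Σ_{1≤i<j≤n} M_{π(i),π(j)} and Var(X) > 0 (variance over uniform π ∈ S_n), and let W = X/√Var(X), W' = X(π∘c_I)/√Var(X) where π is uniform on S_n and I is uniform on {1,…,n}, independently. Then E|W' − W|³ ≥ (4/n)^{3/2}. -/

import Mathlib

/-- The cycle `c_i` on `Fin n` mapping `i → i+1 → ⋯ → n-1 → i` and fixing `0,…,i-1`
(0-indexed version of the cycle on `{1,…,n}` mapping `i → i+1 → ⋯ → n → i`). -/
def cyc {n : ℕ} (i : Fin n) : Equiv.Perm (Fin n) :=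
  (Fin.revPerm.trans ((Fin.cycleRange i.rev).trans Fin.revPerm)).symm

/-- The number of descents of a permutation of `Fin n`: the number of indices `i`
with `i+1 < n` and `π(i) > π(i+1)`. -/
def descents {n : ℕ} (π : Equiv.Perm (Fin n)) : ℕ :=
  (Finset.univ.filter fun i : Fin (n - 1) =>
    π ⟨i.1 + 1, by have := i.2; omega⟩ < π ⟨i.1, by have := i.2; omega⟩).card

/-- The number of inversions of a permutation of `Fin n`: the number of pairs
`i < j` with `π(i) > π(j)`. -/
def inversions {n : ℕ} (π : Equiv.Perm (Fin n)) : ℕ :=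
  (Finset.univ.filter fun p : Fin n × Fin n => p.1 < p.2 ∧ π p.2 < π p.1).card

/-- `X(π) = ∑_{i<j} M_{π(i),π(j)}`. -/
def Xstat {n : ℕ} (M : Fin n → Fin n → ℝ) (π : Equiv.Perm (Fin n)) : ℝ :=
  ∑ p ∈ Finset.univ.filter (fun p : Fin n × Fin n => p.1 < p.2), M (π p.1) (π p.2)

/-- Expectation of a statistic under the uniform measure on the symmetric group. -/
noncomputable def permExp {n : ℕ} (f : Equiv.Perm (Fin n) → ℝ) : ℝ :=
  (∑ π : Equiv.Perm (Fin n), f π) / (n.factorial : ℝ)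

/-- Variance of a statistic under the uniform measure on the symmetric group. -/
noncomputable def permVar {n : ℕ} (f : Equiv.Perm (Fin n) → ℝ) : ℝ :=
  permExp (fun π => (f π - permExp f) ^ 2)

lemma cyc_symm_val {n : ℕ} (i x : Fin n) :
    (((cyc i).symm x : Fin n) : ℕ) =
      if (x:ℕ) < (i:ℕ) then (x:ℕ) else if (x:ℕ) = (i:ℕ) then n - 1 else (x:ℕ) - 1 := by
  match n with
  | 0 => exact x.elim0
  | Nat.succ m =>
    have hx : (cyc i).symm x = Fin.rev (Fin.cycleRange i.rev x.rev) := rfl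
    have hxm := x.isLt
    have him := i.isLt
    rcases lt_trichotomy x i with h | h | h
    · rw [if_pos ((Fin.lt_def).mp h), hx, Fin.cycleRange_of_gt (by rwa [Fin.rev_lt_rev]), Fin.rev_rev]
    · subst h
      rw [if_neg (lt_irrefl _), if_pos rfl, hx, Fin.cycleRange_self, Fin.val_rev, Fin.val_zero]
    · have hlt : (i:ℕ) < (x:ℕ) := h
      rw [if_neg (by omega), if_neg (by omega), hx,
        Fin.cycleRange_of_lt (by rwa [Fin.rev_lt_rev]), Fin.val_rev,
        Fin.val_add_one_of_lt (lt_of_lt_of_le (by rwa [Fin.rev_lt_rev]) (Fin.le_last _)),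
        Fin.val_rev]
      omega

lemma flip_iff₁ {n : ℕ} (i a b : Fin n) :
    ((cyc i).symm a < (cyc i).symm b ∧ ¬ a < b) ↔ (b = i ∧ i < a) := by
  have ha := a.isLt; have hb := b.isLt; have hi := i.isLt
  simp only [Fin.lt_def, cyc_symm_val, Fin.ext_iff]
  split_ifs <;> omega

lemma flip_iff₂ {n : ℕ} (i a b : Fin n) :
    (a < b ∧ ¬ (cyc i).symm a < (cyc i).symm b) ↔ (a = i ∧ i < b) := by
  have ha := a.isLt; have hb := b.isLt; have hi := i.isLt
  simp only [Fin.lt_def, cyc_symm_val, Fin.ext_iff]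
  split_ifs <;> omega

lemma Xstat_mul_cyc {n : ℕ} (M : Fin n → Fin n → ℝ) (hM : ∀ i j, M j i = - M i j)
    (π : Equiv.Perm (Fin n)) (i : Fin n) :
    Xstat M (π * cyc i) = Xstat M π
      + (-2) * ∑ j ∈ Finset.univ.filter (fun j => i < j), M (π i) (π j) := by
  have h1 : Xstat M (π * cyc i)
      = ∑ p ∈ Finset.univ.filter
          (fun p : Fin n × Fin n => (cyc i).symm p.1 < (cyc i).symm p.2),
          M (π p.1) (π p.2) := by
    rw [Xstat]
    refine Finset.sum_equiv (Equiv.prodCongr (cyc i) (cyc i)) (fun p => ?_) (fun p _ => ?_)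
    · simp
    · simp [Equiv.Perm.mul_apply]
  have h2 : Xstat M (π * cyc i) - Xstat M π
      = ∑ p : Fin n × Fin n,
          ((if (p.2 = i ∧ i < p.1) then M (π p.1) (π p.2) else 0)
            - (if (p.1 = i ∧ i < p.2) then M (π p.1) (π p.2) else 0)) := by
    rw [h1, Xstat, Finset.sum_filter, Finset.sum_filter, ← Finset.sum_sub_distrib]
    refine Finset.sum_congr rfl (fun p _ => ?_)
    by_cases hA : (cyc i).symm p.1 < (cyc i).symm p.2 <;> by_cases hB : p.1 < p.2
    · rw [if_pos hA, if_pos hB,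
        if_neg (fun h => absurd ((flip_iff₁ i p.1 p.2).mpr h).2 (by tauto)),
        if_neg (fun h => absurd ((flip_iff₂ i p.1 p.2).mpr h).2 (by tauto))]
      ring
    · rw [if_pos hA, if_neg hB, if_pos ((flip_iff₁ i p.1 p.2).mp ⟨hA, hB⟩),
        if_neg (fun h => absurd ((flip_iff₂ i p.1 p.2).mpr h).1 hB)]
    · rw [if_neg hA, if_pos hB, if_pos ((flip_iff₂ i p.1 p.2).mp ⟨hB, hA⟩),
        if_neg (fun h => absurd ((flip_iff₁ i p.1 p.2).mpr h).1 hA)]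
    · rw [if_neg hA, if_neg hB,
        if_neg (fun h => absurd ((flip_iff₁ i p.1 p.2).mpr h).1 hA),
        if_neg (fun h => absurd ((flip_iff₂ i p.1 p.2).mpr h).1 hB)]
  have h3 : ∑ p : Fin n × Fin n,
          ((if (p.2 = i ∧ i < p.1) then M (π p.1) (π p.2) else 0)
            - (if (p.1 = i ∧ i < p.2) then M (π p.1) (π p.2) else 0))
      = (-2) * ∑ j ∈ Finset.univ.filter (fun j => i < j), M (π i) (π j) := by
    rw [Finset.sum_sub_distrib, Fintype.sum_prod_type, Fintype.sum_prod_type]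
    have e1 : ∀ a : Fin n, ∑ b : Fin n, (if (b = i ∧ i < a) then M (π a) (π b) else 0)
        = if i < a then M (π a) (π i) else 0 := by
      intro a
      simp [ite_and, Finset.sum_ite_eq']
    have e2 : ∑ a : Fin n, ∑ b : Fin n, (if (a = i ∧ i < b) then M (π a) (π b) else 0)
        = ∑ b : Fin n, (if i < b then M (π i) (π b) else 0) := by
      rw [Finset.sum_comm]
      refine Finset.sum_congr rfl (fun b _ => ?_)
      simp [ite_and, Finset.sum_ite_eq']
    rw [e2]
    simp only [e1]
    rw [← Finset.sum_sub_distrib, Finset.mul_sum, Finset.sum_filter]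
    refine Finset.sum_congr rfl (fun a _ => ?_)
    by_cases h : i < a
    · rw [if_pos h, if_pos h, if_pos h, hM (π i) (π a)]; ring
    · rw [if_neg h, if_neg h, if_neg h]; ring
  linarith [h2, h3]

lemma sum_S_eq {n : ℕ} (M : Fin n → Fin n → ℝ) (π : Equiv.Perm (Fin n)) :
    ∑ i : Fin n, ∑ j ∈ Finset.univ.filter (fun j => i < j), M (π i) (π j)
      = Xstat M π := by
  rw [Xstat, Finset.sum_filter, Fintype.sum_prod_type]
  exact Finset.sum_congr rfl (fun i _ => (Finset.sum_filter _ _))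

lemma sum_cyc {n : ℕ} (M : Fin n → Fin n → ℝ) (hM : ∀ i j, M j i = - M i j)
    (π : Equiv.Perm (Fin n)) :
    ∑ i : Fin n, Xstat M (π * cyc i) = (n : ℝ) * Xstat M π - 2 * Xstat M π := by
  simp only [Xstat_mul_cyc M hM π]
  rw [Finset.sum_add_distrib, ← Finset.mul_sum, sum_S_eq M π, Finset.sum_const,
    Finset.card_univ, Fintype.card_fin, nsmul_eq_mul]
  ring

lemma sum_X_zero {n : ℕ} (M : Fin n → Fin n → ℝ) (hM : ∀ i j, M j i = - M i j) :
    ∑ π : Equiv.Perm (Fin n), Xstat M π = 0 := by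
  have hrev : ∀ π : Equiv.Perm (Fin n), Xstat M (π * Fin.revPerm) = - Xstat M π := by
    intro π
    have : Xstat M (π * Fin.revPerm)
        = ∑ p ∈ Finset.univ.filter (fun p : Fin n × Fin n => p.1 < p.2),
            (- M (π p.1) (π p.2)) := by
      rw [Xstat]
      refine Finset.sum_equiv
        ((Equiv.prodComm (Fin n) (Fin n)).trans
          (Equiv.prodCongr Fin.revPerm Fin.revPerm)) (fun p => ?_) (fun p hp => ?_)
      · simp [Fin.rev_lt_rev]
      · exact hM _ _
    rw [this, Xstat, Finset.sum_neg_distrib]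
  have h2 : ∑ π : Equiv.Perm (Fin n), Xstat M (π * Fin.revPerm)
      = ∑ π : Equiv.Perm (Fin n), Xstat M π :=
    Fintype.sum_equiv (Equiv.mulRight Fin.revPerm) _ _ (fun π => rfl)
  simp only [hrev, Finset.sum_neg_distrib] at h2
  linarith

lemma sum_sq_mul {n : ℕ} (M : Fin n → Fin n → ℝ) (g : Equiv.Perm (Fin n)) :
    ∑ π : Equiv.Perm (Fin n), Xstat M (π * g) ^ 2
      = ∑ π : Equiv.Perm (Fin n), Xstat M π ^ 2 :=
  Fintype.sum_equiv (Equiv.mulRight g) _ _ (fun π => rfl)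


/-- For an antisymmetric matrix `M` with `Var(X) > 0`, and
`W = X/√Var(X)`, `W' = X(π∘c_I)/√Var(X)` with `(π, I)` uniform on `S_n × {1,…,n}`,
one has `E|W' − W|³ ≥ (4/n)^{3/2}`. -/
theorem expect_cube_diff_ge {n : ℕ} (M : Fin n → Fin n → ℝ)
    (hM : ∀ i j, M j i = - M i j) (hvar : 0 < permVar (Xstat M)) :
    (∑ π : Equiv.Perm (Fin n), ∑ i : Fin n,
        |Xstat M (π * cyc i) / Real.sqrt (permVar (Xstat M))
          - Xstat M π / Real.sqrt (permVar (Xstat M))| ^ 3)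
        / ((n.factorial : ℝ) * (n : ℝ))
      ≥ (4 / (n : ℝ)) ^ ((3 : ℝ) / 2) := by
  have hn : n ≠ 0 := by
    rintro rfl
    have hX0 : Xstat M = fun _ => (0 : ℝ) := by
      funext π
      rw [Xstat]
      simp
    rw [hX0] at hvar
    simp [permVar, permExp] at hvar
  have hs0 : 0 < Real.sqrt (permVar (Xstat M)) := Real.sqrt_pos.mpr hvar
  have hssq : Real.sqrt (permVar (Xstat M)) ^ 2 = permVar (Xstat M) :=
    Real.sq_sqrt hvar.le
  have hNpos : (0 : ℝ) < (n.factorial : ℝ) := by positivity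
  have hnR : (0 : ℝ) < (n : ℝ) := by exact_mod_cast Nat.pos_of_ne_zero hn
  have hexp0 : permExp (Xstat M) = 0 := by
    rw [permExp, sum_X_zero M hM]
    simp
  have hA : ∑ π : Equiv.Perm (Fin n), Xstat M π ^ 2
      = (n.factorial : ℝ) * permVar (Xstat M) := by
    rw [permVar, hexp0, permExp]
    field_simp
    simp only [sub_zero]
  -- sum of squared differences equals 4 n! V
  have hsum2 : ∑ π : Equiv.Perm (Fin n), ∑ i : Fin n,
      (Xstat M (π * cyc i) - Xstat M π) ^ 2
      = 4 * ((n.factorial : ℝ) * permVar (Xstat M)) := by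
    have hper : ∀ π : Equiv.Perm (Fin n),
        ∑ i : Fin n, (Xstat M (π * cyc i) - Xstat M π) ^ 2
          = ∑ i : Fin n, Xstat M (π * cyc i) ^ 2 + (4 - (n : ℝ)) * Xstat M π ^ 2 := by
      intro π
      calc ∑ i : Fin n, (Xstat M (π * cyc i) - Xstat M π) ^ 2
          = ∑ i : Fin n, (Xstat M (π * cyc i) ^ 2
              - 2 * Xstat M π * Xstat M (π * cyc i) + Xstat M π ^ 2) :=
            Finset.sum_congr rfl (fun i _ => by ring)
        _ = ∑ i : Fin n, Xstat M (π * cyc i) ^ 2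
              - 2 * Xstat M π * (∑ i : Fin n, Xstat M (π * cyc i))
              + (n : ℝ) * Xstat M π ^ 2 := by
            rw [Finset.sum_add_distrib, Finset.sum_sub_distrib, ← Finset.mul_sum,
              Finset.sum_const, Finset.card_univ, Fintype.card_fin, nsmul_eq_mul]
        _ = ∑ i : Fin n, Xstat M (π * cyc i) ^ 2 + (4 - (n : ℝ)) * Xstat M π ^ 2 := by
            rw [sum_cyc M hM π]
            ring
    have h1 : ∑ π : Equiv.Perm (Fin n), ∑ i : Fin n, Xstat M (π * cyc i) ^ 2
        = (n : ℝ) * ((n.factorial : ℝ) * permVar (Xstat M)) := by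
      rw [Finset.sum_comm]
      have : ∀ i : Fin n, ∑ π : Equiv.Perm (Fin n), Xstat M (π * cyc i) ^ 2
          = (n.factorial : ℝ) * permVar (Xstat M) := fun i => by
        rw [sum_sq_mul M (cyc i), hA]
      simp only [this]
      rw [Finset.sum_const, Finset.card_univ, Fintype.card_fin, nsmul_eq_mul]
    calc ∑ π : Equiv.Perm (Fin n), ∑ i : Fin n,
        (Xstat M (π * cyc i) - Xstat M π) ^ 2
        = ∑ π : Equiv.Perm (Fin n), (∑ i : Fin n, Xstat M (π * cyc i) ^ 2
            + (4 - (n : ℝ)) * Xstat M π ^ 2) :=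
          Finset.sum_congr rfl (fun π _ => hper π)
      _ = ∑ π : Equiv.Perm (Fin n), ∑ i : Fin n, Xstat M (π * cyc i) ^ 2
            + (4 - (n : ℝ)) * ∑ π : Equiv.Perm (Fin n), Xstat M π ^ 2 := by
          rw [Finset.sum_add_distrib, ← Finset.mul_sum]
      _ = 4 * ((n.factorial : ℝ) * permVar (Xstat M)) := by
          rw [h1, hA]
          ring
  -- Jensen's inequality
  set V := permVar (Xstat M) with hV
  set s := Real.sqrt V with hsdef
  set w : Equiv.Perm (Fin n) × Fin n → ℝ := fun _ => 1 / ((n.factorial : ℝ) * (n : ℝ)) with hw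
  set z : Equiv.Perm (Fin n) × Fin n → ℝ :=
    fun p => ((Xstat M (p.1 * cyc p.2) - Xstat M p.1) / s) ^ 2 with hz
  have hw' : ∑ p : Equiv.Perm (Fin n) × Fin n, w p = 1 := by
    simp only [hw]
    rw [Finset.sum_const, Finset.card_univ, Fintype.card_prod, Fintype.card_perm,
      Fintype.card_fin, nsmul_eq_mul]
    push_cast
    field_simp
  have hsz : ∑ p : Equiv.Perm (Fin n) × Fin n, z p = 4 * (n.factorial : ℝ) := by
    have : ∀ p : Equiv.Perm (Fin n) × Fin n,
        z p = (Xstat M (p.1 * cyc p.2) - Xstat M p.1) ^ 2 / V := by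
      intro p
      simp only [hz]
      rw [div_pow, hsdef, hssq]
    simp only [this]
    rw [← Finset.sum_div, Fintype.sum_prod_type, hsum2]
    field_simp
  have hwz : ∑ p : Equiv.Perm (Fin n) × Fin n, w p * z p = 4 / (n : ℝ) := by
    simp only [hw]
    rw [← Finset.mul_sum, hsz]
    field_simp
  have key := Real.rpow_arith_mean_le_arith_mean_rpow Finset.univ w z
    (fun _ _ => by positivity) hw' (fun p _ => sq_nonneg _)
    (p := (3 : ℝ) / 2) (by norm_num)
  have hzp : ∀ p : Equiv.Perm (Fin n) × Fin n,
      z p ^ ((3 : ℝ) / 2) = |Xstat M (p.1 * cyc p.2) / s - Xstat M p.1 / s| ^ 3 := by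
    intro p
    simp only [hz, div_sub_div_same]
    set d := (Xstat M (p.1 * cyc p.2) - Xstat M p.1) / s with hd
    rw [← sq_abs, ← Real.rpow_natCast |d| 2, ← Real.rpow_natCast |d| 3,
      ← Real.rpow_mul (abs_nonneg d)]
    norm_num
  rw [ge_iff_le]
  calc (4 / (n : ℝ)) ^ ((3 : ℝ) / 2)
      = (∑ p : Equiv.Perm (Fin n) × Fin n, w p * z p) ^ ((3 : ℝ) / 2) := by rw [hwz]
    _ ≤ ∑ p : Equiv.Perm (Fin n) × Fin n, w p * z p ^ ((3 : ℝ) / 2) := key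
    _ = (∑ π : Equiv.Perm (Fin n), ∑ i : Fin n,
          |Xstat M (π * cyc i) / s - Xstat M π / s| ^ 3) / ((n.factorial : ℝ) * (n : ℝ)) := by
        simp only [hzp, hw]
        rw [← Finset.mul_sum, Fintype.sum_prod_type, one_div, inv_mul_eq_div]
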